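/- Let T : ℓ²(ℤ) → ℓ²(ℤ) be an invertible bilateral weighted shift with weight sequence (w_n)_{n∈ℤ}. Then T is topologically multiply recurrent if and only if for every m ∈ ℕ there exists a strictly increasing sequence of positive integers (n_k) such that for every l = 1, …, m, lim_{k→∞} ∏_{i=1}^{l n_k} w_i = +∞ and lim_{k→∞} ∏_{i=0}^{l n_k} 1/w_{−i} = +∞. -/

import Mathlib

open Filter Topology

/-- Topological multiple recurrence for an operator. -/
def TopMultiplyRecurrent {X : Type*} [NormedAddCommGroup X] [NormedSpace ℂ X]
    (T : X →L[ℂ] X) : Prop :=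
  ∀ U : Set X, IsOpen U → U.Nonempty → ∀ m : ℕ, 0 < m →
    ∃ k : ℕ, 0 < k ∧
      (⋂ j ∈ Finset.range (m + 1), (T ^ (j * k) : X →L[ℂ] X) ⁻¹' U).Nonempty

noncomputable section

/-- Partial product of weights: `Pw w n N = w (n+1) * w (n+2) * ⋯ * w (n+N)`. -/
def Pw (w : ℤ → ℝ) (n : ℤ) (N : ℕ) : ℝ := ∏ i ∈ Finset.range N, w (n + 1 + i)

lemma Pw_zero (w : ℤ → ℝ) (n : ℤ) : Pw w n 0 = 1 := by simp [Pw]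

lemma Pw_pos {w : ℤ → ℝ} (hw : ∀ n, 0 < w n) (n : ℤ) (N : ℕ) : 0 < Pw w n N :=
  Finset.prod_pos fun i _ => hw _

lemma Pw_add (w : ℤ → ℝ) (n : ℤ) (A B : ℕ) :
    Pw w n (A + B) = Pw w n A * Pw w (n + A) B := by
  rw [Pw, Finset.prod_range_add]
  congr 1
  apply Finset.prod_congr rfl
  intro i _
  congr 1
  push_cast
  ring

lemma Pw_succ_right (w : ℤ → ℝ) (n : ℤ) (N : ℕ) :
    Pw w n (N + 1) = Pw w n N * w (n + N + 1) := by
  rw [Pw_add]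
  simp [Pw]

lemma Pw_succ_left (w : ℤ → ℝ) (n : ℤ) (N : ℕ) :
    Pw w n (N + 1) = w (n + 1) * Pw w (n + 1) N := by
  rw [add_comm N 1, Pw_add]
  simp [Pw]

section shiftbounds

variable {w : ℤ → ℝ} {c C : ℝ} (hc0 : 0 < c) (hc : ∀ i, c ≤ w i) (hC : ∀ i, w i ≤ C)

include hc0 hc hC

lemma Pw_step_up (b : ℤ) (N : ℕ) : Pw w (b + 1) N ≤ (C / c) * Pw w b N := by
  have hwpos : ∀ n, 0 < w n := fun n => lt_of_lt_of_le hc0 (hc n)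
  have key : w (b + 1) * Pw w (b + 1) N = Pw w b N * w (b + N + 1) := by
    rw [← Pw_succ_left, Pw_succ_right]
  have h1 : Pw w (b + 1) N = Pw w b N * (w (b + N + 1) / w (b + 1)) := by
    rw [mul_div_assoc'] at *
    rw [eq_div_iff (hwpos (b+1)).ne']
    linarith [key]
  rw [h1]
  have h2 : w (b + N + 1) / w (b + 1) ≤ C / c :=
    div_le_div₀ (le_trans hc0.le (le_trans (hc 0) (hC 0))) (hC _) hc0 (hc _)
  calc Pw w b N * (w (b + N + 1) / w (b + 1)) ≤ Pw w b N * (C / c) := by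
        exact mul_le_mul_of_nonneg_left h2 (Pw_pos hwpos b N).le
    _ = (C / c) * Pw w b N := mul_comm _ _

lemma Pw_step_down (b : ℤ) (N : ℕ) : Pw w b N ≤ (C / c) * Pw w (b + 1) N := by
  have hwpos : ∀ n, 0 < w n := fun n => lt_of_lt_of_le hc0 (hc n)
  have key : w (b + 1) * Pw w (b + 1) N = Pw w b N * w (b + N + 1) := by
    rw [← Pw_succ_left, Pw_succ_right]
  have h1 : Pw w b N = Pw w (b + 1) N * (w (b + 1) / w (b + N + 1)) := by
    rw [mul_div_assoc']
    rw [eq_div_iff (hwpos (b + N + 1)).ne']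
    linarith [key]
  rw [h1]
  have h2 : w (b + 1) / w (b + N + 1) ≤ C / c :=
    div_le_div₀ (le_trans hc0.le (le_trans (hc 0) (hC 0))) (hC _) hc0 (hc _)
  calc Pw w (b + 1) N * (w (b + 1) / w (b + N + 1)) ≤ Pw w (b + 1) N * (C / c) :=
        mul_le_mul_of_nonneg_left h2 (Pw_pos hwpos _ N).le
    _ = (C / c) * Pw w (b + 1) N := mul_comm _ _

lemma Pw_shift (a n : ℤ) (N : ℕ) :
    Pw w (a + n) N ≤ (C / c) ^ n.natAbs * Pw w a N ∧
      Pw w a N ≤ (C / c) ^ n.natAbs * Pw w (a + n) N := by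
  have hr1 : (1 : ℝ) ≤ C / c := by
    rw [le_div_iff₀ hc0]
    simpa using le_trans (hc 0) (hC 0)
  have hr0 : (0 : ℝ) ≤ C / c := le_trans zero_le_one hr1
  induction n using Int.induction_on with
  | zero => simp
  | succ i ih =>
    have hAbs : ((i : ℤ) + 1).natAbs = (i : ℤ).natAbs + 1 := by omega
    constructor
    · calc Pw w (a + (i + 1)) N = Pw w ((a + i) + 1) N := by ring_nf
        _ ≤ (C / c) * Pw w (a + i) N := Pw_step_up hc0 hc hC _ N
        _ ≤ (C / c) * ((C / c) ^ (i : ℤ).natAbs * Pw w a N) :=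
            mul_le_mul_of_nonneg_left ih.1 hr0
        _ = (C / c) ^ (((i : ℤ) + 1).natAbs) * Pw w a N := by rw [hAbs]; ring
    · calc Pw w a N ≤ (C / c) ^ (i : ℤ).natAbs * Pw w (a + i) N := ih.2
        _ ≤ (C / c) ^ (i : ℤ).natAbs * ((C / c) * Pw w ((a + i) + 1) N) :=
            mul_le_mul_of_nonneg_left (Pw_step_down hc0 hc hC _ N) (pow_nonneg hr0 _)
        _ = (C / c) ^ (((i : ℤ) + 1).natAbs) * Pw w (a + (i + 1)) N := by
            rw [hAbs]; ring_nf
  | pred i ih =>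
    have hAbs : (-(i : ℤ) - 1).natAbs = ((-(i : ℤ)).natAbs) + 1 := by omega
    constructor
    · calc Pw w (a + (-(i : ℤ) - 1)) N = Pw w ((a + (-(i:ℤ) - 1))) N := rfl
        _ ≤ (C / c) * Pw w ((a + (-(i:ℤ) - 1)) + 1) N := Pw_step_down hc0 hc hC _ N
        _ = (C / c) * Pw w (a + (-(i:ℤ))) N := by ring_nf
        _ ≤ (C / c) * ((C / c) ^ (-(i : ℤ)).natAbs * Pw w a N) :=
            mul_le_mul_of_nonneg_left ih.1 hr0
        _ = (C / c) ^ ((-(i : ℤ) - 1).natAbs) * Pw w a N := by rw [hAbs]; ring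
    · calc Pw w a N ≤ (C / c) ^ (-(i : ℤ)).natAbs * Pw w (a + (-(i:ℤ))) N := ih.2
        _ = (C / c) ^ (-(i : ℤ)).natAbs * Pw w ((a + (-(i:ℤ) - 1)) + 1) N := by ring_nf
        _ ≤ (C / c) ^ (-(i : ℤ)).natAbs * ((C / c) * Pw w (a + (-(i:ℤ) - 1)) N) :=
            mul_le_mul_of_nonneg_left (Pw_step_up hc0 hc hC _ N) (pow_nonneg hr0 _)
        _ = (C / c) ^ ((-(i : ℤ) - 1).natAbs) * Pw w (a + (-(i : ℤ) - 1)) N := by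
            rw [hAbs]; ring

end shiftbounds

section lpstuff

abbrev H2 : Type := lp (fun _ : ℤ => ℂ) 2

lemma norm_single2 (n : ℤ) (a : ℂ) : ‖(lp.single 2 n a : H2)‖ = ‖a‖ :=
  lp.norm_single (E := fun _ : ℤ => ℂ) (p := 2) (by norm_num) n a

/-- Evaluation at a coordinate, as a continuous linear map. -/
def evalCLM (n : ℤ) : H2 →L[ℂ] ℂ :=
  LinearMap.mkContinuous
    { toFun := fun x => x n
      map_add' := fun x y => by
        show (↑(x + y) : ∀ _ : ℤ, ℂ) n = _
        rw [lp.coeFn_add]; rfl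
      map_smul' := fun c x => by
        show (↑(c • x) : ∀ _ : ℤ, ℂ) n = _
        rw [lp.coeFn_smul]; rfl }
    1 (fun x => by
      simpa using lp.norm_apply_le_norm (p := 2) (by norm_num) x n)

@[simp] lemma evalCLM_apply (n : ℤ) (x : H2) : evalCLM n x = x n := rfl

lemma clm_ext_single (f g : H2 →L[ℂ] ℂ)
    (h : ∀ (n : ℤ) (c : ℂ), f (lp.single 2 n c) = g (lp.single 2 n c)) (x : H2) :
    f x = g x := by
  have hs := lp.hasSum_single (E := fun _ : ℤ => ℂ) (p := 2) (by norm_num) x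
  have hf := hs.mapL f
  have hg := hs.mapL g
  have heq : (fun n => f (lp.single 2 n (x n))) = fun n => g (lp.single 2 n (x n)) :=
    funext fun n => h n _
  rw [heq] at hf
  exact hf.unique hg

lemma single_eq_smul (m : ℤ) (c : ℂ) : (lp.single 2 m c : H2) = c • (lp.single 2 m (1 : ℂ) : H2) := by
  rw [← lp.single_smul (E := fun _ : ℤ => ℂ) 2 m c (1 : ℂ)]
  norm_num

section withT

variable {w : ℤ → ℝ} {T : H2 →L[ℂ] H2}
  (hT : ∀ n : ℤ, T (lp.single 2 n (1 : ℂ)) = (w n : ℂ) • lp.single 2 (n - 1) (1 : ℂ))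

include hT

lemma pow_single : ∀ (N : ℕ) (n : ℤ),
    (T ^ N) (lp.single 2 n (1 : ℂ)) =
      ((Pw w (n - N) N : ℝ) : ℂ) • lp.single 2 (n - N) (1 : ℂ) := by
  intro N
  induction N with
  | zero => intro n; simp [Pw_zero]
  | succ N ih =>
    intro n
    rw [pow_succ, ContinuousLinearMap.mul_apply, hT n, map_smul, ih (n - 1), smul_smul]
    have h1 : n - 1 - N = n - (N + 1 : ℕ) := by push_cast; ring
    rw [h1]
    congr 1
    have h2 : Pw w (n - (N + 1 : ℕ)) (N + 1) = Pw w (n - (N+1:ℕ)) N * w n := by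
      rw [Pw_succ_right]
      congr 2
      push_cast; ring
    rw [h2]
    push_cast
    ring

lemma coord_pow (N : ℕ) (n : ℤ) (x : H2) :
    ((T ^ N) x : ∀ _ : ℤ, ℂ) n = ((Pw w n N : ℝ) : ℂ) * x (n + N) := by
  have key := clm_ext_single ((evalCLM n).comp (T ^ N))
      (((Pw w n N : ℝ) : ℂ) • evalCLM (n + N)) ?_ x
  · simpa using key
  · intro m c
    rw [ContinuousLinearMap.comp_apply, single_eq_smul, map_smul, pow_single hT N m]
    simp only [ContinuousLinearMap.smul_apply, evalCLM_apply, map_smul]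
    by_cases hm : m = n + N
    · subst hm
      have : n + N - N = n := by ring
      rw [this]
      simp [lp.single_apply_self, smul_eq_mul]
    · have h1 : n ≠ m - N := by omega
      have h2 : n + N ≠ m := by omega
      rw [lp.single_apply_ne 2 _ _ h1, lp.single_apply_ne 2 _ _ h2]
      simp

end withT

end lpstuff

lemma prodIcc_eq_Pw (w : ℤ → ℝ) (L : ℕ) :
    ∏ i ∈ Finset.Icc 1 L, w (i : ℤ) = Pw w 0 L := by
  induction L with
  | zero => simp [Pw_zero]
  | succ L ih =>
    rw [Finset.prod_Icc_succ_top (by omega), ih, Pw_succ_right]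
    push_cast
    ring_nf

lemma prodNeg_eq_Pw (w : ℤ → ℝ) (L : ℕ) :
    ∏ i ∈ Finset.range (L + 1), w (-(i : ℤ)) = Pw w (-(L : ℤ) - 1) (L + 1) := by
  rw [Pw, ← Finset.prod_range_reflect]
  apply Finset.prod_congr rfl
  intro j hj
  rw [Finset.mem_range] at hj
  congr 1
  push_cast [Nat.cast_sub (by omega : j ≤ L)]
  omega

lemma prodNegInv_eq (w : ℤ → ℝ) (L : ℕ) :
    ∏ i ∈ Finset.range (L + 1), (w (-(i : ℤ)))⁻¹ = (Pw w (-(L : ℤ) - 1) (L + 1))⁻¹ := by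
  rw [← prodNeg_eq_Pw, Finset.prod_inv_distrib]

lemma Pw_neg_split (w : ℤ → ℝ) (L : ℕ) :
    Pw w (-(L : ℤ) - 1) (L + 1) = w (-(L : ℤ)) * Pw w (-(L : ℤ)) L := by
  rw [add_comm L 1, Pw_add]
  congr 1
  · simp [Pw]
  · congr 1; ring

section main

variable {w : ℤ → ℝ} {c C : ℝ} {T : H2 →L[ℂ] H2}

set_option maxHeartbeats 2000000 in
lemma recurrence_step (hc0 : 0 < c) (hc : ∀ n, c ≤ w n) (hC : ∀ n, w n ≤ C)
    (hT : ∀ n : ℤ, T (lp.single 2 n (1 : ℂ)) = (w n : ℂ) • lp.single 2 (n - 1) (1 : ℂ))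
    (hrec : TopMultiplyRecurrent T) (m : ℕ) (hm : 0 < m) (K₀ : ℕ) (M : ℝ) (hM : 1 ≤ M) :
    ∃ k : ℕ, K₀ < k ∧ ∀ l : ℕ, 1 ≤ l → l ≤ m →
      M < Pw w 0 (l * k) ∧ M < (Pw w (-(l * k : ℕ) - 1) (l * k + 1))⁻¹ := by
  have hw_pos : ∀ n, 0 < w n := fun n => lt_of_lt_of_le hc0 (hc n)
  have hC0 : 0 < C := lt_of_lt_of_le (hw_pos 0) (hC 0)
  set M₀ : ℝ := ∑ k' ∈ Finset.range (K₀ + 1), Pw w 0 k' with hM₀def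
  have hM₀pos : 0 < M₀ := Finset.sum_pos (fun i _ => Pw_pos hw_pos 0 i) ⟨0, by simp⟩
  set ε : ℝ := (2 * (1 + C) * (1 + M + M₀))⁻¹ with hεdef
  have hden : (2 : ℝ) ≤ 2 * (1 + C) * (1 + M + M₀) := by nlinarith
  have hε0 : 0 < ε := by positivity
  have hεhalf : ε ≤ 1 / 2 := by
    rw [hεdef]
    rw [inv_le_comm₀ (by linarith) (by norm_num)]
    linarith
  -- apply recurrence to the ball around e₀
  set e0 : H2 := lp.single 2 0 (1 : ℂ) with he0def
  obtain ⟨k, hk0, z, hz⟩ := hrec (Metric.ball e0 ε) Metric.isOpen_ball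
    ⟨e0, Metric.mem_ball_self hε0⟩ m hm
  rw [Set.mem_iInter₂] at hz
  have hz' : ∀ j : ℕ, j ≤ m → ‖(T ^ (j * k)) z - e0‖ < ε := by
    intro j hj
    have := hz j (by simp [Finset.mem_range]; omega)
    rwa [Set.mem_preimage, Metric.mem_ball, dist_eq_norm] at this
  have hz0 : ‖z - e0‖ < ε := by simpa using hz' 0 (by omega)
  -- coordinatewise bounds
  have hcoord : ∀ (v : H2) (n : ℤ), ‖v - e0‖ < ε → ‖(v : ∀ _ : ℤ, ℂ) n - (e0 : ∀ _ : ℤ, ℂ) n‖ < ε := by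
    intro v n hv
    have h1 : ‖(v - e0 : H2) n‖ ≤ ‖v - e0‖ := lp.norm_apply_le_norm (by norm_num) _ n
    have h2 : (v - e0 : H2) n = v n - (e0 : ∀ _ : ℤ, ℂ) n := by
      rw [lp.coeFn_sub]; rfl
    rw [h2] at h1
    exact lt_of_le_of_lt h1 hv
  have he0self : (e0 : ∀ _ : ℤ, ℂ) 0 = 1 := lp.single_apply_self 2 0 1
  have he0ne : ∀ n : ℤ, n ≠ 0 → (e0 : ∀ _ : ℤ, ℂ) n = 0 := fun n hn =>
    lp.single_apply_ne 2 0 1 hn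
  -- the key estimates for 1 ≤ l ≤ m
  have key : ∀ l : ℕ, 1 ≤ l → l ≤ m →
      (1 + C) * (1 + M + M₀) < Pw w 0 (l * k) ∧
        Pw w (-(l * k : ℕ) - 1) (l * k + 1) < (1 + M + M₀)⁻¹ := by
    intro l hl1 hlm
    have hlk : 0 < l * k := Nat.mul_pos hl1 hk0
    have hlkZ : ((l * k : ℕ) : ℤ) ≠ 0 := by exact_mod_cast hlk.ne'
    have hv := hz' l hlm
    set A : ℝ := Pw w 0 (l * k) with hAdef
    have hApos : 0 < A := Pw_pos hw_pos _ _
    set B : ℝ := Pw w (-(l * k : ℕ)) (l * k) with hBdef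
    have hBpos : 0 < B := Pw_pos hw_pos _ _
    -- coordinate 0 of T^(lk) z
    have hc0' : ((T ^ (l * k)) z : ∀ _ : ℤ, ℂ) 0 = (A : ℂ) * z ((l * k : ℕ)) := by
      rw [coord_pow hT (l * k) 0 z]
      rw [show (0 : ℤ) + ((l * k : ℕ) : ℤ) = ((l * k : ℕ) : ℤ) from zero_add _]
    have h1 : ‖(A : ℂ) * z ((l * k : ℕ)) - 1‖ < ε := by
      have := hcoord _ 0 hv
      rwa [hc0', he0self] at this
    have h2 : ‖z ((l * k : ℕ))‖ < ε := by
      have := hcoord z ((l * k : ℕ)) hz0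
      rwa [he0ne _ hlkZ, sub_zero] at this
    have h3 : 1 - ε ≤ ‖(A : ℂ) * z ((l * k : ℕ))‖ := by
      have h3a := norm_sub_norm_le (1 : ℂ) ((A : ℂ) * z ((l * k : ℕ)))
      rw [norm_sub_rev, norm_one] at h3a
      linarith
    have h4 : ‖(A : ℂ) * z ((l * k : ℕ))‖ = A * ‖z ((l * k : ℕ))‖ := by
      rw [norm_mul, Complex.norm_real, Real.norm_of_nonneg hApos.le]
    have h5 : A * ε > 1 - ε := by
      rw [h4] at h3
      nlinarith [h3, h2, hApos]
    have hA : (1 + C) * (1 + M + M₀) < A := by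
      have hεval : ε * (2 * (1 + C) * (1 + M + M₀)) = 1 := by
        rw [hεdef]; field_simp
      nlinarith [h5, hεhalf, hε0]
    -- coordinate -lk of T^(lk) z
    have hcm : ((T ^ (l * k)) z : ∀ _ : ℤ, ℂ) (-(l * k : ℕ)) = (B : ℂ) * z 0 := by
      rw [coord_pow hT (l * k) (-(l * k : ℕ)) z]
      rw [show -((l * k : ℕ) : ℤ) + ((l * k : ℕ) : ℤ) = 0 by ring]
    have h6 : ‖(B : ℂ) * z 0‖ < ε := by
      have := hcoord _ (-(l * k : ℕ)) hv
      rwa [hcm, he0ne _ (neg_ne_zero.mpr hlkZ), sub_zero] at this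
    have h7 : 1 - ε ≤ ‖z 0‖ := by
      have h7a := hcoord z 0 hz0
      rw [he0self] at h7a
      have h7b := norm_sub_norm_le (1 : ℂ) (z 0)
      rw [norm_sub_rev, norm_one] at h7b
      linarith
    have h8 : B * (1 - ε) < ε := by
      have h9 : ‖(B : ℂ) * z 0‖ = B * ‖z 0‖ := by
        rw [norm_mul, Complex.norm_real, Real.norm_of_nonneg hBpos.le]
      rw [h9] at h6
      nlinarith [h6, h7, hBpos]
    have hB : B < 2 * ε := by nlinarith [h8, hεhalf, hε0]
    have hsplit : Pw w (-(l * k : ℕ) - 1) (l * k + 1) = w (-(l * k : ℕ)) * B := Pw_neg_split w (l * k)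
    constructor
    · exact hA
    · rw [hsplit]
      have h10 : w (-(l * k : ℕ)) * B < C * (2 * ε) := by
        have := hC (-(l * k : ℕ))
        nlinarith [hBpos, hw_pos (-(l * k : ℕ)), hB, hC0]
      have h11 : C * (2 * ε) ≤ (1 + M + M₀)⁻¹ := by
        have hpos1 : (0:ℝ) < 2 * (1 + C) * (1 + M + M₀) := by nlinarith
        have hpos2 : (0:ℝ) < 1 + M + M₀ := by nlinarith
        rw [hεdef, inv_eq_one_div, inv_eq_one_div]
        rw [show C * (2 * (1 / (2 * (1 + C) * (1 + M + M₀)))) =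
          (2 * C) / (2 * (1 + C) * (1 + M + M₀)) by ring]
        rw [div_le_div_iff₀ hpos1 hpos2]
        nlinarith
      linarith
  -- conclude: k > K₀
  have hkK : K₀ < k := by
    by_contra hcon
    push_neg at hcon
    have h1 := (key 1 le_rfl hm).1
    have h2 : Pw w 0 (1 * k) ≤ M₀ := by
      rw [hM₀def]
      exact Finset.single_le_sum (f := fun k' => Pw w 0 k') (fun i _ => (Pw_pos hw_pos 0 i).le)
        (by simp [Finset.mem_range]; omega)
    nlinarith [h1, h2, hC0, hM₀pos, hM]
  refine ⟨k, hkK, fun l hl1 hlm => ?_⟩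
  obtain ⟨hA, hB⟩ := key l hl1 hlm
  constructor
  · nlinarith [hA, hC0, hM₀pos]
  · have hPpos : 0 < Pw w (-(l * k : ℕ) - 1) (l * k + 1) := Pw_pos hw_pos _ _
    have : (1 + M + M₀) < (Pw w (-(l * k : ℕ) - 1) (l * k + 1))⁻¹ := by
      have := (inv_lt_inv₀ (by positivity) hPpos).mpr hB
      rwa [inv_inv] at this
    linarith

end main

section main2

variable {w : ℤ → ℝ} {c C : ℝ} {T : H2 →L[ℂ] H2}

lemma forward_dir (hc0 : 0 < c) (hc : ∀ n, c ≤ w n) (hC : ∀ n, w n ≤ C)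
    (hT : ∀ n : ℤ, T (lp.single 2 n (1 : ℂ)) = (w n : ℂ) • lp.single 2 (n - 1) (1 : ℂ))
    (hrec : TopMultiplyRecurrent T) (m : ℕ) (hm : 0 < m) :
    ∃ nk : ℕ → ℕ, StrictMono nk ∧ (∀ k : ℕ, 0 < nk k) ∧
      ∀ l : ℕ, 1 ≤ l → l ≤ m →
        Filter.Tendsto (fun k : ℕ => ∏ i ∈ Finset.Icc 1 (l * nk k), w (i : ℤ))
          Filter.atTop Filter.atTop ∧
        Filter.Tendsto
          (fun k : ℕ => ∏ i ∈ Finset.range (l * nk k + 1), (w (-(i : ℤ)))⁻¹)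
          Filter.atTop Filter.atTop := by
  have step : ∀ (K₀ κ : ℕ), ∃ k : ℕ, K₀ < k ∧ ∀ l, 1 ≤ l → l ≤ m →
      (κ : ℝ) < Pw w 0 (l * k) ∧ (κ : ℝ) < (Pw w (-(l * k : ℕ) - 1) (l * k + 1))⁻¹ := by
    intro K₀ κ
    obtain ⟨k, hk, h⟩ := recurrence_step hc0 hc hC hT hrec m hm K₀ (max κ 1)
      (le_max_right _ _)
    refine ⟨k, hk, fun l h1 h2 => ⟨?_, ?_⟩⟩
    · exact lt_of_le_of_lt (le_max_left (κ : ℝ) 1) (by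
        have := (h l h1 h2).1
        have hcast : ((max κ 1 : ℕ) : ℝ) = max (κ : ℝ) 1 := by push_cast; rfl
        linarith [hcast ▸ this])
    · exact lt_of_le_of_lt (le_max_left (κ : ℝ) 1) (by
        have := (h l h1 h2).2
        have hcast : ((max κ 1 : ℕ) : ℝ) = max (κ : ℝ) 1 := by push_cast; rfl
        linarith [hcast ▸ this])
  let g : ℕ → ℕ := fun κ =>
    Nat.rec (step 0 0).choose (fun κ' prev => (step prev (κ' + 1)).choose) κ
  have hg0 : 0 < g 0 := (step 0 0).choose_spec.1
  have hgstep : ∀ κ, g κ < g (κ + 1) := fun κ => (step (g κ) (κ + 1)).choose_spec.1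
  have hgood : ∀ (κ : ℕ) (l : ℕ), 1 ≤ l → l ≤ m →
      (κ : ℝ) < Pw w 0 (l * g κ) ∧ (κ : ℝ) < (Pw w (-(l * g κ : ℕ) - 1) (l * g κ + 1))⁻¹ := by
    intro κ
    cases κ with
    | zero => exact (step 0 0).choose_spec.2
    | succ κ' => exact (step (g κ') (κ' + 1)).choose_spec.2
  have hgpos : ∀ κ, 0 < g κ := by
    intro κ
    induction κ with
    | zero => exact hg0
    | succ κ ih => exact lt_trans ih (hgstep κ)
  refine ⟨g, strictMono_nat_of_lt_succ hgstep, hgpos, fun l hl1 hlm => ⟨?_, ?_⟩⟩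
  · refine tendsto_atTop_mono (fun κ => ?_) tendsto_natCast_atTop_atTop
    rw [prodIcc_eq_Pw]
    exact (hgood κ l hl1 hlm).1.le
  · refine tendsto_atTop_mono (fun κ => ?_) tendsto_natCast_atTop_atTop
    rw [prodNegInv_eq]
    exact (hgood κ l hl1 hlm).2.le

end main2

lemma norm_comb_le {ι : Type*} (s : Finset ι) (cf : ι → ℂ) (pos : ι → ℤ) :
    ‖∑ i ∈ s, cf i • (lp.single 2 (pos i) (1 : ℂ) : H2)‖ ≤ ∑ i ∈ s, ‖cf i‖ := by
  refine (norm_sum_le _ _).trans (Finset.sum_le_sum fun i _ => ?_)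
  rw [norm_smul, norm_single2]
  simp

section main3

variable {w : ℤ → ℝ} {c C : ℝ} {T : H2 →L[ℂ] H2}

set_option maxHeartbeats 4000000 in
lemma backward_dir (hc0 : 0 < c) (hc : ∀ n, c ≤ w n) (hC : ∀ n, w n ≤ C)
    (hT : ∀ n : ℤ, T (lp.single 2 n (1 : ℂ)) = (w n : ℂ) • lp.single 2 (n - 1) (1 : ℂ))
    (hcond : ∀ m : ℕ, 0 < m →
        ∃ nk : ℕ → ℕ, StrictMono nk ∧ (∀ k : ℕ, 0 < nk k) ∧
          ∀ l : ℕ, 1 ≤ l → l ≤ m →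
            Filter.Tendsto (fun k : ℕ => ∏ i ∈ Finset.Icc 1 (l * nk k), w (i : ℤ))
              Filter.atTop Filter.atTop ∧
            Filter.Tendsto
              (fun k : ℕ => ∏ i ∈ Finset.range (l * nk k + 1), (w (-(i : ℤ)))⁻¹)
              Filter.atTop Filter.atTop) :
    TopMultiplyRecurrent T := by
  have hw_pos : ∀ n, 0 < w n := fun n => lt_of_lt_of_le hc0 (hc n)
  have hr1 : (1 : ℝ) ≤ C / c := by
    rw [le_div_iff₀ hc0]
    simpa using le_trans (hc 0) (hC 0)
  have hr0 : (0 : ℝ) < C / c := lt_of_lt_of_le zero_lt_one hr1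
  intro U hUopen hUne m hm
  obtain ⟨x, hx⟩ := hUne
  obtain ⟨ε, hε0, hball⟩ := Metric.isOpen_iff.mp hUopen x hx
  -- finitely supported approximation x'
  have hs := lp.hasSum_single (E := fun _ : ℤ => ℂ) (p := 2) (by norm_num) x
  have hev := Metric.tendsto_nhds.mp hs (ε / 2) (half_pos hε0)
  obtain ⟨F, hF⟩ := hev.exists
  set x' : H2 := ∑ n ∈ F, lp.single 2 n (x n) with hx'def
  have hx'x : ‖x' - x‖ < ε / 2 := by rwa [← dist_eq_norm]
  -- constants
  set ρ : ℝ := 1 + ∑ n ∈ F, (C / c) ^ n.natAbs with hρdef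
  have hρ1 : (1 : ℝ) ≤ ρ := by
    rw [hρdef]
    have : (0:ℝ) ≤ ∑ n ∈ F, (C / c) ^ n.natAbs :=
      Finset.sum_nonneg fun n _ => pow_nonneg hr0.le _
    linarith
  have hρ0 : (0 : ℝ) < ρ := lt_of_lt_of_le zero_lt_one hρ1
  have hρn : ∀ n ∈ F, (C / c) ^ n.natAbs ≤ ρ := by
    intro n hn
    rw [hρdef]
    have := Finset.single_le_sum (f := fun n : ℤ => (C / c) ^ n.natAbs)
      (fun i _ => pow_nonneg hr0.le _) hn
    linarith
  set S : ℝ := ∑ n ∈ F, ‖x n‖ with hSdef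
  have hS0 : 0 ≤ S := Finset.sum_nonneg fun n _ => norm_nonneg _
  set δ : ℝ := ε / 2 with hδdef
  have hδ0 : 0 < δ := half_pos hε0
  set E : ℝ := 2 * (m + 1) * (S + 1) * ρ / δ with hEdef
  have hE0 : 0 < E := by positivity
  -- key final numeric bound
  have hEinv : (0:ℝ) < E⁻¹ := by positivity
  have hnum : ((m : ℝ) + 1) * (S * (ρ * E⁻¹)) < δ := by
    have hEinveq : E⁻¹ = δ / (2 * (m + 1) * (S + 1) * ρ) := by
      rw [hEdef, inv_div]
    rw [hEinveq]
    rw [show ((m:ℝ) + 1) * (S * (ρ * (δ / (2 * (m + 1) * (S + 1) * ρ)))) =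
      (((m:ℝ) + 1) * S * ρ * δ) / (2 * (m + 1) * (S + 1) * ρ) by ring]
    rw [div_lt_iff₀ (by positivity)]
    have h1 : ((m:ℝ)+1)*S < 2*((m:ℝ)+1)*(S+1) := by nlinarith [hS0, (by positivity : (0:ℝ) < (m:ℝ)+1)]
    have h2 := mul_lt_mul_of_pos_left h1 (mul_pos hδ0 hρ0)
    nlinarith [h2]
  -- choose κ
  obtain ⟨nk, hmono, hposnk, hlim⟩ := hcond m hm
  have hev2 : ∀ᶠ κ in Filter.atTop, ∀ l ∈ Finset.Icc 1 m,
      E < Pw w 0 (l * nk κ) ∧ Pw w (-(l * nk κ : ℕ)) (l * nk κ) < E⁻¹ := by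
    rw [Filter.eventually_all_finset]
    intro l hl
    rw [Finset.mem_Icc] at hl
    obtain ⟨h1, h2⟩ := hlim l hl.1 hl.2
    have e1 : ∀ᶠ κ in Filter.atTop, E < Pw w 0 (l * nk κ) := by
      have := h1.eventually_gt_atTop E
      refine this.mono fun κ hκ => ?_
      rwa [prodIcc_eq_Pw] at hκ
    have e2 : ∀ᶠ κ in Filter.atTop, Pw w (-(l * nk κ : ℕ)) (l * nk κ) < E⁻¹ := by
      have := h2.eventually_gt_atTop (E⁻¹ * c)⁻¹
      refine this.mono fun κ hκ => ?_
      rw [prodNegInv_eq] at hκ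
      set P1 := Pw w (-(l * nk κ : ℕ) - 1) (l * nk κ + 1) with hP1
      have hP1pos : 0 < P1 := Pw_pos hw_pos _ _
      have hb : (0:ℝ) < E⁻¹ * c := by positivity
      have h3 : P1 < E⁻¹ * c := (inv_lt_inv₀ hb hP1pos).mp hκ
      have hsplit := Pw_neg_split w (l * nk κ)
      have hw1 : c ≤ w (-(l * nk κ : ℕ)) := hc _
      have hP2pos : 0 < Pw w (-(l * nk κ : ℕ)) (l * nk κ) := Pw_pos hw_pos _ _
      nlinarith [hsplit, hP1pos, hP2pos]
    exact e1.and e2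
  obtain ⟨κ, hκ⟩ := hev2.exists
  set k : ℕ := nk κ with hkdef
  have hk0 : 0 < k := hposnk κ
  have hbound : ∀ l : ℕ, 1 ≤ l → l ≤ m →
      E < Pw w 0 (l * k) ∧ Pw w (-(l * k : ℕ)) (l * k) < E⁻¹ := fun l h1 h2 =>
    hκ l (Finset.mem_Icc.mpr ⟨h1, h2⟩)
  -- two generic coefficient bounds
  have hsmall1 : ∀ (n : ℤ), n ∈ F → ∀ l : ℕ, 1 ≤ l → l ≤ m →
      (Pw w n (l * k))⁻¹ ≤ ρ * E⁻¹ := by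
    intro n hn l h1 h2
    have hP0 : E < Pw w 0 (l * k) := (hbound l h1 h2).1
    have hPn : 0 < Pw w n (l * k) := Pw_pos hw_pos _ _
    have hsh := (Pw_shift hc0 hc hC 0 n (l * k)).2
    rw [zero_add] at hsh
    -- Pw 0 ≤ r^|n| * Pw n  ⇒  Pw n ≥ Pw 0 / r^|n| > E / ρ ≥ ...
    have hrn : (C / c) ^ n.natAbs ≤ ρ := hρn n hn
    have hrnpos : (0:ℝ) < (C / c) ^ n.natAbs := pow_pos hr0 _
    have h3 : E < ρ * Pw w n (l * k) :=
      lt_of_lt_of_le hP0 (le_trans hsh (mul_le_mul_of_nonneg_right hrn hPn.le))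
    rw [inv_le_iff_one_le_mul₀ hPn]
    have hE1 : E⁻¹ * E = 1 := inv_mul_cancel₀ hE0.ne'
    calc (1:ℝ) = E⁻¹ * E := hE1.symm
      _ ≤ E⁻¹ * (ρ * Pw w n (l * k)) := by
          apply mul_le_mul_of_nonneg_left h3.le hEinv.le
      _ = ρ * E⁻¹ * Pw w n (l * k) := by ring
  have hsmall2 : ∀ (n : ℤ), n ∈ F → ∀ l : ℕ, 1 ≤ l → l ≤ m →
      Pw w (n - (l * k : ℕ)) (l * k) ≤ ρ * E⁻¹ := by
    intro n hn l h1 h2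
    have hP0 : Pw w (-(l * k : ℕ)) (l * k) < E⁻¹ := (hbound l h1 h2).2
    have hsh := (Pw_shift hc0 hc hC (-(l * k : ℕ)) n (l * k)).1
    rw [show -((l * k : ℕ) : ℤ) + n = n - (l * k : ℕ) by ring] at hsh
    have hrn : (C / c) ^ n.natAbs ≤ ρ := hρn n hn
    have hP2 : 0 < Pw w (-(l * k : ℕ)) (l * k) := Pw_pos hw_pos _ _
    have hrnpos : (0:ℝ) < (C / c) ^ n.natAbs := pow_pos hr0 _
    calc Pw w (n - (l * k : ℕ)) (l * k) ≤ (C / c) ^ n.natAbs * Pw w (-(l * k : ℕ)) (l * k) := hsh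
      _ ≤ ρ * E⁻¹ := by
          apply mul_le_mul hrn hP0.le hP2.le hρ0.le
  -- the approximate-periodic vector y
  set y : H2 := x' + ∑ j ∈ Finset.Icc 1 m, ∑ n ∈ F,
      ((x n : ℂ) / ((Pw w n (j * k) : ℝ) : ℂ)) •
        (lp.single 2 (n + ((j * k : ℕ) : ℤ)) (1 : ℂ) : H2) with hydef
  have hinnerb : ∀ j ∈ Finset.Icc 1 m,
      ‖∑ n ∈ F, ((x n : ℂ) / ((Pw w n (j * k) : ℝ) : ℂ)) •
        (lp.single 2 (n + ((j * k : ℕ) : ℤ)) (1 : ℂ) : H2)‖ ≤ S * (ρ * E⁻¹) := by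
    intro j hj
    rw [Finset.mem_Icc] at hj
    refine (norm_comb_le F _ _).trans ?_
    rw [hSdef, Finset.sum_mul]
    refine Finset.sum_le_sum fun n hn => ?_
    rw [norm_div, Complex.norm_real, Real.norm_of_nonneg (Pw_pos hw_pos _ _).le,
      div_eq_mul_inv]
    exact mul_le_mul_of_nonneg_left (hsmall1 n hn j hj.1 hj.2) (norm_nonneg _)
  have hcorr : ‖y - x'‖ ≤ (m : ℝ) * (S * (ρ * E⁻¹)) := by
    rw [hydef, add_sub_cancel_left]
    refine (norm_sum_le _ _).trans ?_
    calc ∑ j ∈ Finset.Icc 1 m, ‖∑ n ∈ F, ((x n : ℂ) / ((Pw w n (j * k) : ℝ) : ℂ)) •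
          (lp.single 2 (n + ((j * k : ℕ) : ℤ)) (1 : ℂ) : H2)‖
        ≤ ∑ _j ∈ Finset.Icc 1 m, S * (ρ * E⁻¹) := Finset.sum_le_sum hinnerb
      _ = (m : ℝ) * (S * (ρ * E⁻¹)) := by
          rw [Finset.sum_const, Nat.card_Icc, nsmul_eq_mul]
          norm_num
  have hSEnn : 0 ≤ S * (ρ * E⁻¹) := by positivity
  have hydist : ‖y - x'‖ < δ := by
    have : (m : ℝ) * (S * (ρ * E⁻¹)) ≤ ((m : ℝ) + 1) * (S * (ρ * E⁻¹)) := by nlinarith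
    linarith [hcorr, hnum]
  -- main estimate for powers
  have hkey : ∀ j' : ℕ, 1 ≤ j' → j' ≤ m → ‖(T ^ (j' * k)) y - x'‖ < δ := by
    intro j' hj'1 hj'm
    -- image of each inner sum
    have himg : ∀ j : ℕ,
        (T ^ (j' * k)) (∑ n ∈ F, ((x n : ℂ) / ((Pw w n (j * k) : ℝ) : ℂ)) •
          (lp.single 2 (n + ((j * k : ℕ) : ℤ)) (1 : ℂ) : H2)) =
        ∑ n ∈ F, (((x n : ℂ) / ((Pw w n (j * k) : ℝ) : ℂ)) *
            ((Pw w (n + ((j * k : ℕ) : ℤ) - ((j' * k : ℕ) : ℤ)) (j' * k) : ℝ) : ℂ)) •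
          (lp.single 2 (n + ((j * k : ℕ) : ℤ) - ((j' * k : ℕ) : ℤ)) (1 : ℂ) : H2) := by
      intro j
      rw [map_sum]
      refine Finset.sum_congr rfl fun n hn => ?_
      rw [map_smul, pow_single hT, smul_smul]
    -- the j = j' term reproduces x'
    have hjj : ∑ n ∈ F, (((x n : ℂ) / ((Pw w n (j' * k) : ℝ) : ℂ)) *
          ((Pw w (n + ((j' * k : ℕ) : ℤ) - ((j' * k : ℕ) : ℤ)) (j' * k) : ℝ) : ℂ)) •
        (lp.single 2 (n + ((j' * k : ℕ) : ℤ) - ((j' * k : ℕ) : ℤ)) (1 : ℂ) : H2) = x' := by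
      rw [hx'def]
      refine Finset.sum_congr rfl fun n hn => ?_
      have hpos : n + ((j' * k : ℕ) : ℤ) - ((j' * k : ℕ) : ℤ) = n := by ring
      rw [hpos, div_mul_cancel₀ _
        (Complex.ofReal_ne_zero.mpr (Pw_pos hw_pos n (j' * k)).ne'), ← single_eq_smul]
    -- image of x'
    have hTx'norm : ‖(T ^ (j' * k)) x'‖ ≤ S * (ρ * E⁻¹) := by
      have hTx' : (T ^ (j' * k)) x' = ∑ n ∈ F,
          ((x n : ℂ) * ((Pw w (n - ((j' * k : ℕ) : ℤ)) (j' * k) : ℝ) : ℂ)) •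
            (lp.single 2 (n - ((j' * k : ℕ) : ℤ)) (1 : ℂ) : H2) := by
        rw [hx'def, map_sum]
        refine Finset.sum_congr rfl fun n hn => ?_
        rw [single_eq_smul, map_smul, pow_single hT, smul_smul]
      rw [hTx']
      refine (norm_comb_le F _ _).trans ?_
      rw [hSdef, Finset.sum_mul]
      refine Finset.sum_le_sum fun n hn => ?_
      rw [norm_mul, Complex.norm_real, Real.norm_of_nonneg (Pw_pos hw_pos _ _).le]
      exact mul_le_mul_of_nonneg_left (hsmall2 n hn j' hj'1 hj'm) (norm_nonneg _)
    -- cross terms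
    have hcross : ∀ j ∈ (Finset.Icc 1 m).erase j',
        ‖∑ n ∈ F, (((x n : ℂ) / ((Pw w n (j * k) : ℝ) : ℂ)) *
            ((Pw w (n + ((j * k : ℕ) : ℤ) - ((j' * k : ℕ) : ℤ)) (j' * k) : ℝ) : ℂ)) •
          (lp.single 2 (n + ((j * k : ℕ) : ℤ) - ((j' * k : ℕ) : ℤ)) (1 : ℂ) : H2)‖
          ≤ S * (ρ * E⁻¹) := by
      intro j hjmem
      have hjne : j ≠ j' := Finset.ne_of_mem_erase hjmem
      have hjIcc := Finset.mem_of_mem_erase hjmem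
      rw [Finset.mem_Icc] at hjIcc
      refine (norm_comb_le F _ _).trans ?_
      rw [hSdef, Finset.sum_mul]
      refine Finset.sum_le_sum fun n hn => ?_
      rw [norm_mul, norm_div, Complex.norm_real, Complex.norm_real,
        Real.norm_of_nonneg (Pw_pos hw_pos _ _).le,
        Real.norm_of_nonneg (Pw_pos hw_pos _ _).le, div_mul_eq_mul_div, mul_div_assoc]
      refine mul_le_mul_of_nonneg_left ?_ (norm_nonneg _)
      -- ratio bound, by cases on j vs j'
      rcases lt_or_gt_of_ne hjne with hlt | hgt
      · -- j < j' : set l := j' - j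
        set l : ℕ := j' - j with hldef
        have hl1 : 1 ≤ l := by omega
        have hlm : l ≤ m := by omega
        have hNsplit : j' * k = l * k + j * k := by
          rw [hldef, ← add_mul, Nat.sub_add_cancel hlt.le]
        have hposz : n + ((j * k : ℕ) : ℤ) - ((j' * k : ℕ) : ℤ) = n - ((l * k : ℕ) : ℤ) := by
          have : ((j' * k : ℕ) : ℤ) = ((l * k : ℕ) : ℤ) + ((j * k : ℕ) : ℤ) := by
            rw [hNsplit]; push_cast; ring
          omega
        have hPsplit : Pw w (n - ((l * k : ℕ) : ℤ)) (j' * k) =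
            Pw w (n - ((l * k : ℕ) : ℤ)) (l * k) * Pw w n (j * k) := by
          rw [hNsplit, Pw_add]
          congr 2
          push_cast; ring
        rw [hposz, hPsplit]
        rw [mul_div_assoc, div_self (Pw_pos hw_pos n (j * k)).ne', mul_one]
        exact hsmall2 n hn l hl1 hlm
      · -- j > j' : set l := j - j'
        set l : ℕ := j - j' with hldef
        have hl1 : 1 ≤ l := by omega
        have hlm : l ≤ m := by omega
        have hNsplit : j * k = l * k + j' * k := by
          rw [hldef, ← add_mul, Nat.sub_add_cancel hgt.le]
        have hposz : n + ((j * k : ℕ) : ℤ) - ((j' * k : ℕ) : ℤ) = n + ((l * k : ℕ) : ℤ) := by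
          have : ((j * k : ℕ) : ℤ) = ((l * k : ℕ) : ℤ) + ((j' * k : ℕ) : ℤ) := by
            rw [hNsplit]; push_cast; ring
          omega
        have hPsplit : Pw w n (j * k) =
            Pw w n (l * k) * Pw w (n + ((l * k : ℕ) : ℤ)) (j' * k) := by
          rw [hNsplit, Pw_add]
        rw [hposz, hPsplit]
        rw [div_mul_eq_div_div_swap, div_self (Pw_pos hw_pos _ _).ne', one_div]
        exact hsmall1 n hn l hl1 hlm
    -- assemble
    have hj'mem : j' ∈ Finset.Icc 1 m := Finset.mem_Icc.mpr ⟨hj'1, hj'm⟩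
    have hydecomp : (T ^ (j' * k)) y - x' = (T ^ (j' * k)) x' +
        ∑ j ∈ (Finset.Icc 1 m).erase j',
          ∑ n ∈ F, (((x n : ℂ) / ((Pw w n (j * k) : ℝ) : ℂ)) *
              ((Pw w (n + ((j * k : ℕ) : ℤ) - ((j' * k : ℕ) : ℤ)) (j' * k) : ℝ) : ℂ)) •
            (lp.single 2 (n + ((j * k : ℕ) : ℤ) - ((j' * k : ℕ) : ℤ)) (1 : ℂ) : H2) := by
      have hcorrimg : (T ^ (j' * k)) (∑ j ∈ Finset.Icc 1 m, ∑ n ∈ F,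
          ((x n : ℂ) / ((Pw w n (j * k) : ℝ) : ℂ)) •
            (lp.single 2 (n + ((j * k : ℕ) : ℤ)) (1 : ℂ) : H2)) = x' +
          ∑ j ∈ (Finset.Icc 1 m).erase j',
            ∑ n ∈ F, (((x n : ℂ) / ((Pw w n (j * k) : ℝ) : ℂ)) *
                ((Pw w (n + ((j * k : ℕ) : ℤ) - ((j' * k : ℕ) : ℤ)) (j' * k) : ℝ) : ℂ)) •
              (lp.single 2 (n + ((j * k : ℕ) : ℤ) - ((j' * k : ℕ) : ℤ)) (1 : ℂ) : H2) := by
        rw [map_sum]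
        simp only [himg]
        rw [← Finset.add_sum_erase _ _ hj'mem]
        beta_reduce
        rw [hjj]
      rw [hydef, map_add, hcorrimg]
      abel
    rw [hydecomp]
    have hcard : ((Finset.Icc 1 m).erase j').card = m - 1 := by
      rw [Finset.card_erase_of_mem hj'mem, Nat.card_Icc]
      omega
    have hsumbound : ‖∑ j ∈ (Finset.Icc 1 m).erase j',
        ∑ n ∈ F, (((x n : ℂ) / ((Pw w n (j * k) : ℝ) : ℂ)) *
            ((Pw w (n + ((j * k : ℕ) : ℤ) - ((j' * k : ℕ) : ℤ)) (j' * k) : ℝ) : ℂ)) •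
          (lp.single 2 (n + ((j * k : ℕ) : ℤ) - ((j' * k : ℕ) : ℤ)) (1 : ℂ) : H2)‖
        ≤ ((m : ℝ) - 1) * (S * (ρ * E⁻¹)) := by
      refine (norm_sum_le _ _).trans ?_
      refine le_trans (Finset.sum_le_sum hcross) ?_
      rw [Finset.sum_const, hcard, nsmul_eq_mul]
      have hmcast : ((m - 1 : ℕ) : ℝ) = (m : ℝ) - 1 := by
        have h1m : (1 : ℕ) ≤ m := hm
        push_cast [Nat.cast_sub h1m]
        ring
      rw [hmcast]
    calc ‖(T ^ (j' * k)) x' + _‖ ≤ ‖(T ^ (j' * k)) x'‖ + _ := norm_add_le _ _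
      _ ≤ S * (ρ * E⁻¹) + ((m : ℝ) - 1) * (S * (ρ * E⁻¹)) := add_le_add hTx'norm hsumbound
      _ = (m : ℝ) * (S * (ρ * E⁻¹)) := by ring
      _ < δ := by
          have : (m : ℝ) * (S * (ρ * E⁻¹)) ≤ ((m : ℝ) + 1) * (S * (ρ * E⁻¹)) := by nlinarith
          linarith [hnum]
  -- conclude
  refine ⟨k, hk0, ⟨y, ?_⟩⟩
  rw [Set.mem_iInter₂]
  intro j hj
  rw [Finset.mem_range] at hj
  rw [Set.mem_preimage]
  apply hball
  rw [Metric.mem_ball, dist_eq_norm]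
  rcases Nat.eq_zero_or_pos j with hj0 | hj1
  · subst hj0
    rw [Nat.zero_mul, pow_zero, ContinuousLinearMap.one_apply]
    calc ‖y - x‖ ≤ ‖y - x'‖ + ‖x' - x‖ := by
          have : y - x = (y - x') + (x' - x) := by abel
          rw [this]; exact norm_add_le _ _
      _ < δ + δ := add_lt_add hydist hx'x
      _ = ε := by rw [hδdef]; ring
  · calc ‖(T ^ (j * k)) y - x‖ ≤ ‖(T ^ (j * k)) y - x'‖ + ‖x' - x‖ := by
          have : (T ^ (j * k)) y - x = ((T ^ (j * k)) y - x') + (x' - x) := by abel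
          rw [this]; exact norm_add_le _ _
      _ < δ + δ := add_lt_add (hkey j hj1 (by omega)) hx'x
      _ = ε := by rw [hδdef]; ring


end main3

theorem stmt11
    (w : ℤ → ℝ) (hw_pos : ∀ n : ℤ, 0 < w n) (hw_bdd : ∃ C : ℝ, ∀ n : ℤ, w n ≤ C)
    (T : lp (fun _ : ℤ => ℂ) 2 →L[ℂ] lp (fun _ : ℤ => ℂ) 2)
    (hT : ∀ n : ℤ, T (lp.single 2 n (1 : ℂ)) = (w n : ℂ) • lp.single 2 (n - 1) (1 : ℂ))
    (hinv : IsUnit T) :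
    TopMultiplyRecurrent T ↔
      ∀ m : ℕ, 0 < m →
        ∃ nk : ℕ → ℕ, StrictMono nk ∧ (∀ k : ℕ, 0 < nk k) ∧
          ∀ l : ℕ, 1 ≤ l → l ≤ m →
            Filter.Tendsto (fun k : ℕ => ∏ i ∈ Finset.Icc 1 (l * nk k), w (i : ℤ))
              Filter.atTop Filter.atTop ∧
            Filter.Tendsto
              (fun k : ℕ => ∏ i ∈ Finset.range (l * nk k + 1), (w (-(i : ℤ)))⁻¹)
              Filter.atTop Filter.atTop := by
  obtain ⟨C, hC⟩ := hw_bdd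
  -- lower bound on the weights from invertibility
  obtain ⟨u, hu⟩ := hinv
  set V : H2 →L[ℂ] H2 := (↑u⁻¹ : H2 →L[ℂ] H2) with hVdef
  have hVT : ∀ v : H2, V (T v) = v := by
    intro v
    rw [hVdef, ← hu, ← ContinuousLinearMap.mul_apply, u.inv_mul,
      ContinuousLinearMap.one_apply]
  set c : ℝ := (‖V‖ + 1)⁻¹ with hcdef
  have hV0 : (0:ℝ) ≤ ‖V‖ := norm_nonneg _
  have hc0 : 0 < c := by rw [hcdef]; positivity
  have hc : ∀ n, c ≤ w n := by
    intro n
    have h1 : V (T (lp.single 2 n (1 : ℂ))) = lp.single 2 n (1 : ℂ) := hVT _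
    rw [hT n, map_smul] at h1
    have h2 : ‖(w n : ℂ) • V (lp.single 2 (n - 1) (1 : ℂ))‖ = 1 := by
      rw [h1, norm_single2]; simp
    rw [norm_smul, Complex.norm_real, Real.norm_of_nonneg (hw_pos n).le] at h2
    have h3 : ‖V (lp.single 2 (n - 1) (1 : ℂ))‖ ≤ ‖V‖ := by
      calc ‖V (lp.single 2 (n - 1) (1 : ℂ))‖ ≤ ‖V‖ * ‖(lp.single 2 (n - 1) (1:ℂ) : H2)‖ :=
            V.le_opNorm _
        _ = ‖V‖ := by rw [norm_single2, norm_one, mul_one]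
    have h4 : w n * (‖V‖ + 1) ≥ 1 := by nlinarith [hw_pos n, h2, h3]
    rw [hcdef, inv_le_iff_one_le_mul₀ (by positivity)]
    nlinarith [hw_pos n, h4]
  constructor
  · intro hrec m hm
    exact forward_dir hc0 hc hC hT hrec m hm
  · intro hcond
    exact backward_dir hc0 hc hC hT hcond
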